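/- arXiv:2008.00779 — 5 statements merged into one kernel-verified Lean document; each statement's English description precedes it below -/
import Mathlib

section
/- If G belongs to the class T_h, then the pathwidth of G is at least h. -/
open SimpleGraph

/-- A tree decomposition of a graph `G`. -/
structure TreeDecomp {V : Type} (G : SimpleGraph V) where
  ι : Type
  tree : SimpleGraph ι
  isTree : tree.IsTree
  bag : ι → Finset V
  covers : ∀ v : V, ∃ x, v ∈ bag x
  coversEdge : ∀ ⦃u v : V⦄, G.Adj u v → ∃ x, u ∈ bag x ∧ v ∈ bag x
  bagConn : ∀ v : V, (tree.induce {x | v ∈ bag x}).Connected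

/-- `G` has a tree decomposition of width at most `k` (bags of size at most `k+1`). -/
def TwLE {V : Type} (G : SimpleGraph V) (k : ℕ) : Prop :=
  ∃ D : TreeDecomp G, ∀ x, (D.bag x).card ≤ k + 1

/-- A path decomposition of a graph `G`: a sequence of bags. -/
structure PathDecomp {V : Type} (G : SimpleGraph V) where
  n : ℕ
  bag : Fin n → Finset V
  covers : ∀ v : V, ∃ i, v ∈ bag i
  coversEdge : ∀ ⦃u v : V⦄, G.Adj u v → ∃ i, u ∈ bag i ∧ v ∈ bag i
  consecutive : ∀ (v : V) (i j k : Fin n), i ≤ j → j ≤ k → v ∈ bag i → v ∈ bag k → v ∈ bag j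

/-- `G` has a path decomposition of width at most `k` (bags of size at most `k+1`). -/
def PwLE {V : Type} (G : SimpleGraph V) (k : ℕ) : Prop :=
  ∃ P : PathDecomp G, ∀ i, (P.bag i).card ≤ k + 1

/-- A copy of a subdivision of the tree `T` inside the graph `G`:
branch vertices `φ x`, and for each edge of `T` a path of `G` between the
corresponding branch vertices, internally disjoint from all branch vertices
and from the paths of all other edges. -/
structure SubdivCopy {α V : Type} (T : SimpleGraph α) (G : SimpleGraph V) where
  φ : α → V
  inj : Function.Injective φ
  path : ∀ ⦃x y : α⦄, T.Adj x y → G.Walk (φ x) (φ y)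
  isPath : ∀ ⦃x y : α⦄ (h : T.Adj x y), (path h).IsPath
  branch : ∀ ⦃x y : α⦄ (h : T.Adj x y) (z : α), φ z ∈ (path h).support → z = x ∨ z = y
  disj : ∀ ⦃x y x' y' : α⦄ (h : T.Adj x y) (h' : T.Adj x' y'),
    ({x, y} : Set α) ≠ {x', y'} →
    ∀ v, v ∈ (path h).support → v ∈ (path h').support →
      v ∈ φ '' (({x, y} : Set α) ∩ {x', y'})

/-- The set of vertices used by a subdivision copy. -/
def SubdivCopy.supp {α V : Type} {T : SimpleGraph α} {G : SimpleGraph V}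
    (c : SubdivCopy T G) : Set V :=
  Set.range c.φ ∪ {v | ∃ x y, ∃ h : T.Adj x y, v ∈ (c.path h).support}

/-- `G` contains a subdivision of `T` as a subgraph. -/
def ContainsSubdiv {α V : Type} (T : SimpleGraph α) (G : SimpleGraph V) : Prop :=
  Nonempty (SubdivCopy T G)

/-- `S` is (isomorphic to) a subdivision of `T`: a subdivision copy of `T`
using all vertices and all edges of `S`. -/
def IsSubdivisionOf {α W : Type} (T : SimpleGraph α) (S : SimpleGraph W) : Prop :=
  ∃ c : SubdivCopy T S, c.supp = Set.univ ∧
    ∀ ⦃u w : W⦄, S.Adj u w → ∃ x y, ∃ h : T.Adj x y, s(u, w) ∈ (c.path h).edges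

/-- The complete binary tree of height `h`, as a simple graph: vertices are
binary strings of length at most `h`, with edges between a string and its
one-letter extensions. -/
def CBT (h : ℕ) : SimpleGraph {l : List Bool // l.length ≤ h} :=
  SimpleGraph.fromRel (fun x y => ∃ b, y.val = b :: x.val)

/-- The root of the complete binary tree. -/
def CBTroot (h : ℕ) : {l : List Bool // l.length ≤ h} := ⟨[], by simp⟩

/-- The complete ternary tree of height `h`, as a simple graph. -/
def CTT (h : ℕ) : SimpleGraph {l : List (Fin 3) // l.length ≤ h} :=
  SimpleGraph.fromRel (fun x y => ∃ b, y.val = b :: x.val)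

/-- The root of the complete ternary tree. -/
def CTTroot (h : ℕ) : {l : List (Fin 3) // l.length ≤ h} := ⟨[], by simp⟩

/-- There are `a ∈ A` and `b ∈ B` joined by a walk of `G` avoiding `C`. -/
def LinkedAvoiding {V : Type} (G : SimpleGraph V) (A B C : Set V) : Prop :=
  ∃ a ∈ A, ∃ b ∈ B, ∃ p : G.Walk a b, ∀ x ∈ p.support, x ∉ C

/-- The classes `𝒯_h`: `InT 0 G` iff `G` is connected (hence non-empty);
`InT (h+1) G` iff `G` is connected and has three pairwise disjoint vertex sets
inducing graphs in `𝒯_h`, any two of which are linked by a path avoiding the third. -/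
def InTAux : ℕ → (V : Type) → SimpleGraph V → Prop
  | 0, _, G => G.Connected
  | h + 1, V, G => G.Connected ∧ ∃ V₁ V₂ V₃ : Set V,
      Disjoint V₁ V₂ ∧ Disjoint V₁ V₃ ∧ Disjoint V₂ V₃ ∧
      InTAux h V₁ (G.induce V₁) ∧ InTAux h V₂ (G.induce V₂) ∧ InTAux h V₃ (G.induce V₃) ∧
      LinkedAvoiding G V₁ V₂ V₃ ∧ LinkedAvoiding G V₁ V₃ V₂ ∧ LinkedAvoiding G V₂ V₃ V₁

def InT (h : ℕ) {V : Type} (G : SimpleGraph V) : Prop := InTAux h V G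


/-! Restrict a path decomposition to each of the three parts `V₁, V₂, V₃`; by induction
each part fills some bag `tᵢ` with `h + 1` of its own vertices. One of the three indices lies between
the other two, say `t₂` between `t₁` and `t₃`. A walk from `V₁` to `V₃` avoiding `V₂` (inside `V₁`
and `V₃` by their connectivity, between them by the linkage) starts in bag `t₁` and ends in bag
`t₃`, so it meets bag `t₂`, adding a vertex outside `V₂` to that bag. -/

lemma Set.mem_uIcc_or_mem_uIcc_or_mem_uIcc {α : Type*} [LinearOrder α] (a b c : α) :
    a ∈ Set.uIcc b c ∨ b ∈ Set.uIcc a c ∨ c ∈ Set.uIcc a b := by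
  simp only [Set.mem_uIcc]
  rcases le_total a b with hab | hba <;> rcases le_total b c with hbc | hcb <;>
    rcases le_total a c with hac | hca <;> tauto

lemma SimpleGraph.Connected.exists_walk_support_subset {V : Type} {G : SimpleGraph V} {A : Set V}
    (hA : (G.induce A).Connected) {u v : V} (hu : u ∈ A) (hv : v ∈ A) :
    ∃ p : G.Walk u v, ∀ x ∈ p.support, x ∈ A := by
  obtain ⟨q⟩ := hA.preconnected ⟨u, hu⟩ ⟨v, hv⟩
  refine ⟨q.map (Embedding.induce A).toHom, fun x hx => ?_⟩
  obtain ⟨y, -, rfl⟩ := List.mem_map.mp (Walk.support_map _ _ ▸ hx)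
  exact y.2

lemma LinkedAvoiding.exists_walk {V : Type} {G : SimpleGraph V} {A B C : Set V}
    (hL : LinkedAvoiding G A C B) (hAB : Disjoint A B) (hCB : Disjoint C B)
    (hA : (G.induce A).Connected) (hC : (G.induce C).Connected)
    {u w : V} (hu : u ∈ A) (hw : w ∈ C) :
    ∃ p : G.Walk u w, ∀ x ∈ p.support, x ∉ B := by
  obtain ⟨a, ha, c, hc, p, hp⟩ := hL
  obtain ⟨q₁, hq₁⟩ := hA.exists_walk_support_subset hu ha
  obtain ⟨q₂, hq₂⟩ := hC.exists_walk_support_subset hc hw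
  refine ⟨(q₁.append p).append q₂, fun x hx => ?_⟩
  rw [Walk.mem_support_append_iff, Walk.mem_support_append_iff] at hx
  rcases hx with (hx | hx) | hx
  · exact hAB.notMem_of_mem_left (hq₁ x hx)
  · exact hp x hx
  · exact hCB.notMem_of_mem_left (hq₂ x hx)

lemma InT.connected {V : Type} {G : SimpleGraph V} {h : ℕ} (hG : InT h G) : G.Connected := by
  cases h with
  | zero => exact hG
  | succ h => exact hG.1

namespace PathDecomp

variable {V : Type} {G : SimpleGraph V}

lemma exists_mem_support_mem_bag_of_le (P : PathDecomp G) {i j k : Fin P.n} (hij : i ≤ j)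
    (hjk : j ≤ k) {u w : V} (p : G.Walk u w) (hu : u ∈ P.bag i) (hw : w ∈ P.bag k) :
    ∃ v ∈ p.support, v ∈ P.bag j := by
  induction p generalizing i with
  | nil => exact ⟨_, by simp, P.consecutive _ i j k hij hjk hu hw⟩
  | cons hadj p ih =>
    obtain ⟨m, hm₁, hm₂⟩ := P.coversEdge hadj
    by_cases hjm : j ≤ m
    · exact ⟨_, by simp, P.consecutive _ i j m hij hjm hu hm₁⟩
    · obtain ⟨v, hv, hvj⟩ := ih (le_of_not_ge hjm) hm₂ hw
      exact ⟨v, by simp [hv], hvj⟩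

lemma exists_mem_support_mem_bag (P : PathDecomp G) {i j k : Fin P.n} (hj : j ∈ Set.uIcc i k)
    {u w : V} (p : G.Walk u w) (hu : u ∈ P.bag i) (hw : w ∈ P.bag k) :
    ∃ v ∈ p.support, v ∈ P.bag j := by
  rcases Set.mem_uIcc.mp hj with ⟨hij, hjk⟩ | ⟨hkj, hji⟩
  · exact P.exists_mem_support_mem_bag_of_le hij hjk p hu hw
  · simpa using P.exists_mem_support_mem_bag_of_le hkj hji p.reverse hw hu

noncomputable def restrict (P : PathDecomp G) (s : Set V) : PathDecomp (G.induce s) :=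
  letI := Classical.decPred (· ∈ s)
  { n := P.n
    bag := fun i => (P.bag i).subtype (· ∈ s)
    covers := fun v => by
      obtain ⟨i, hi⟩ := P.covers v.1
      exact ⟨i, Finset.mem_subtype.mpr hi⟩
    coversEdge := fun u v huv => by
      obtain ⟨i, hu, hv⟩ := P.coversEdge huv
      exact ⟨i, Finset.mem_subtype.mpr hu, Finset.mem_subtype.mpr hv⟩
    consecutive := fun v i j k hij hjk hi hk =>
      Finset.mem_subtype.mpr (P.consecutive v.1 i j k hij hjk
        (Finset.mem_subtype.mp hi) (Finset.mem_subtype.mp hk)) }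

lemma mem_restrict_bag {P : PathDecomp G} {s : Set V} {i : Fin P.n} {x : s} :
    x ∈ (P.restrict s).bag i ↔ x.1 ∈ P.bag i := by
  classical
  exact Finset.mem_subtype

lemma card_restrict_bag_lt (P : PathDecomp G) {s : Set V} {i : Fin P.n} {v : V}
    (hv : v ∈ P.bag i) (hvs : v ∉ s) : ((P.restrict s).bag i).card < (P.bag i).card := by
  classical
  have hsub : ((P.restrict s).bag i).map (Function.Embedding.subtype _) ⊂ P.bag i := by
    refine Finset.ssubset_iff_subset_ne.mpr ⟨fun x hx => ?_, fun heq => hvs ?_⟩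
    · obtain ⟨y, hy, rfl⟩ := Finset.mem_map.mp hx
      exact mem_restrict_bag.mp hy
    · obtain ⟨y, -, rfl⟩ := Finset.mem_map.mp (heq ▸ hv)
      exact y.2
  simpa using Finset.card_lt_card hsub

lemma exists_card_bag_gt_of_mem_uIcc (P : PathDecomp G) {A B C : Set V} {m : ℕ}
    (hL : LinkedAvoiding G A C B) (hAB : Disjoint A B) (hCB : Disjoint C B)
    (hA : (G.induce A).Connected) (hC : (G.induce C).Connected)
    {i j k : Fin P.n} (hj : j ∈ Set.uIcc i k) (hAi : ((P.restrict A).bag i).Nonempty)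
    (hCk : ((P.restrict C).bag k).Nonempty) (hBj : m ≤ ((P.restrict B).bag j).card) :
    ∃ t, m < (P.bag t).card := by
  obtain ⟨u, hu⟩ := hAi
  obtain ⟨w, hw⟩ := hCk
  obtain ⟨p, hp⟩ := hL.exists_walk hAB hCB hA hC u.2 w.2
  obtain ⟨v, hv, hvj⟩ :=
    P.exists_mem_support_mem_bag hj p (mem_restrict_bag.mp hu) (mem_restrict_bag.mp hw)
  exact ⟨j, hBj.trans_lt (P.card_restrict_bag_lt hvj (hp v hv))⟩

end PathDecomp

lemma InT.exists_card_bag_gt {h : ℕ} {V : Type} {G : SimpleGraph V} (hG : InT h G)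
    (P : PathDecomp G) : ∃ t, h < (P.bag t).card := by
  induction h generalizing V G with
  | zero =>
    obtain ⟨v⟩ := hG.nonempty
    obtain ⟨t, ht⟩ := P.covers v
    exact ⟨t, Finset.card_pos.mpr ⟨v, ht⟩⟩
  | succ h ih =>
    obtain ⟨-, V₁, V₂, V₃, d₁₂, d₁₃, d₂₃, h₁, h₂, h₃, L₁₂, L₁₃, L₂₃⟩ := hG
    obtain ⟨t₁, ht₁⟩ := ih h₁ (P.restrict V₁)
    obtain ⟨t₂, ht₂⟩ := ih h₂ (P.restrict V₂)
    obtain ⟨t₃, ht₃⟩ := ih h₃ (P.restrict V₃)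
    have n₁ := Finset.card_pos.mp (h.zero_le.trans_lt ht₁)
    have n₂ := Finset.card_pos.mp (h.zero_le.trans_lt ht₂)
    have n₃ := Finset.card_pos.mp (h.zero_le.trans_lt ht₃)
    have c₁ : (G.induce V₁).Connected := InT.connected h₁
    have c₂ : (G.induce V₂).Connected := InT.connected h₂
    have c₃ : (G.induce V₃).Connected := InT.connected h₃
    rcases Set.mem_uIcc_or_mem_uIcc_or_mem_uIcc t₁ t₂ t₃ with ht | ht | ht
    · exact P.exists_card_bag_gt_of_mem_uIcc L₂₃ d₁₂.symm d₁₃.symm c₂ c₃ ht n₂ n₃ ht₁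
    · exact P.exists_card_bag_gt_of_mem_uIcc L₁₃ d₁₂ d₂₃.symm c₁ c₃ ht n₁ n₃ ht₂
    · exact P.exists_card_bag_gt_of_mem_uIcc L₁₂ d₁₃ d₂₃ c₁ c₂ ht n₁ n₂ ht₃

theorem stmt1 {V : Type} (G : SimpleGraph V) (h : ℕ) (hG : InT h G) :
    ∀ k, PwLE G k → h ≤ k := by
  rintro k ⟨P, hP⟩
  obtain ⟨t, ht⟩ := hG.exists_card_bag_gt P
  exact Nat.lt_succ_iff.mp (ht.trans_le (hP t))
end

section
/- If a connected graph G on at most t vertices contains a cycle or a vertex of degree at least 3, then G has three vertices v_1, v_2, v_3 such that any two of them can be connected by a path in G avoiding the third; consequently G ∈ T_1. -/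
open SimpleGraph

namespace SimpleGraph

variable {V : Type} {G : SimpleGraph V}

def IsLinkedTriple (G : SimpleGraph V) (v₁ v₂ v₃ : V) : Prop :=
  v₁ ≠ v₂ ∧ v₁ ≠ v₃ ∧ v₂ ≠ v₃ ∧
    (∃ p : G.Walk v₁ v₂, p.IsPath ∧ v₃ ∉ p.support) ∧
    (∃ p : G.Walk v₁ v₃, p.IsPath ∧ v₂ ∉ p.support) ∧
    (∃ p : G.Walk v₂ v₃, p.IsPath ∧ v₁ ∉ p.support)

lemma Adj.exists_isPath_avoiding {u v x : V} (huv : G.Adj u v) (hxu : x ≠ u) (hxv : x ≠ v) :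
    ∃ p : G.Walk u v, p.IsPath ∧ x ∉ p.support :=
  ⟨huv.toWalk, by simp [huv.ne], by simp [hxu, hxv]⟩

lemma Adj.exists_isPath_avoiding_of_adj {u m w x : V} (hum : G.Adj u m) (hmw : G.Adj m w)
    (huw : u ≠ w) (hxu : x ≠ u) (hxm : x ≠ m) (hxw : x ≠ w) :
    ∃ p : G.Walk u w, p.IsPath ∧ x ∉ p.support :=
  ⟨hum.toWalk.append hmw.toWalk, by simp [Walk.isPath_def, hum.ne, hmw.ne, huw],
    by simp [hxu, hxm, hxw]⟩

/-- The first three vertices `v, w₁, w₂` of a cycle form a linked triple: the edges `v w₁`, `w₁ w₂`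
and the rest of the cycle, read backwards from `w₂` to `v`. -/
lemma Walk.IsCycle.exists_isLinkedTriple {v : V} {c : G.Walk v v} (hc : c.IsCycle) :
    ∃ v₁ v₂ v₃ : V, G.IsLinkedTriple v₁ v₂ v₃ := by
  cases c with
  | nil => exact absurd rfl hc.ne_nil
  | @cons _ w₁ _ h₁ p =>
    rw [Walk.cons_isCycle_iff] at hc
    obtain ⟨hp, hv₁⟩ := hc
    cases p with
    | nil => exact absurd rfl h₁.ne
    | @cons _ w₂ _ h₂ q =>
      rw [Walk.cons_isPath_iff] at hp
      obtain ⟨hq, hw₁q⟩ := hp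
      -- `w₂ = v` would make `s(w₁, v)` the first edge of the tail, against `hv₁`.
      have hw₂v : w₂ ≠ v := by rintro rfl; simp [Sym2.eq_swap] at hv₁
      exact ⟨v, w₁, w₂, h₁.ne, hw₂v.symm, h₂.ne,
        h₁.exists_isPath_avoiding hw₂v h₂.ne',
        ⟨q.reverse, hq.reverse, by simpa using hw₁q⟩,
        h₂.exists_isPath_avoiding h₁.ne hw₂v.symm⟩

/-- Any three neighbours of `v` form a linked triple, through `v`. -/
lemma exists_isLinkedTriple_of_three_le_ncard_neighborSet {v : V}
    (h : 3 ≤ (G.neighborSet v).ncard) : ∃ v₁ v₂ v₃ : V, G.IsLinkedTriple v₁ v₂ v₃ := by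
  have hfin : (G.neighborSet v).Finite := Set.finite_of_ncard_pos (by omega)
  obtain ⟨a, ha, b, hb, c, hc, hab, hac, hbc⟩ := (Set.two_lt_ncard hfin).mp h
  rw [mem_neighborSet] at ha hb hc
  exact ⟨a, b, c, hab, hac, hbc,
    ha.symm.exists_isPath_avoiding_of_adj hb hab hac.symm hc.ne' hbc.symm,
    ha.symm.exists_isPath_avoiding_of_adj hc hac hab.symm hb.ne' hbc,
    hb.symm.exists_isPath_avoiding_of_adj hc hbc hab ha.ne' hac⟩

lemma linkedAvoiding_singleton {u v x : V} (h : ∃ p : G.Walk u v, p.IsPath ∧ x ∉ p.support) :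
    LinkedAvoiding G {u} {v} {x} := by
  obtain ⟨p, -, hx⟩ := h
  exact ⟨u, rfl, v, rfl, p, fun y hy hyx => hx (hyx ▸ hy)⟩

lemma connected_induce_singleton (G : SimpleGraph V) (v : V) : (G.induce {v}).Connected := by
  simp

lemma IsLinkedTriple.inT_one {v₁ v₂ v₃ : V} (hG : G.Connected) (h : G.IsLinkedTriple v₁ v₂ v₃) :
    InT 1 G := by
  obtain ⟨h₁₂, h₁₃, h₂₃, p₁₂, p₁₃, p₂₃⟩ := h
  exact ⟨hG, {v₁}, {v₂}, {v₃}, by simpa, by simpa, by simpa,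
    connected_induce_singleton G v₁, connected_induce_singleton G v₂,
    connected_induce_singleton G v₃, linkedAvoiding_singleton p₁₂,
    linkedAvoiding_singleton p₁₃, linkedAvoiding_singleton p₂₃⟩

end SimpleGraph

theorem stmt9_general {V : Type} (G : SimpleGraph V) (hG : G.Connected)
    (hyp : (∃ (v : V) (c : G.Walk v v), c.IsCycle) ∨ ∃ v : V, 3 ≤ (G.neighborSet v).ncard) :
    (∃ v₁ v₂ v₃ : V, v₁ ≠ v₂ ∧ v₁ ≠ v₃ ∧ v₂ ≠ v₃ ∧
      (∃ p : G.Walk v₁ v₂, p.IsPath ∧ v₃ ∉ p.support) ∧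
      (∃ p : G.Walk v₁ v₃, p.IsPath ∧ v₂ ∉ p.support) ∧
      (∃ p : G.Walk v₂ v₃, p.IsPath ∧ v₁ ∉ p.support)) ∧ InT 1 G := by
  obtain ⟨v₁, v₂, v₃, h⟩ : ∃ v₁ v₂ v₃ : V, G.IsLinkedTriple v₁ v₂ v₃ := by
    rcases hyp with ⟨v, c, hc⟩ | ⟨v, hdeg⟩
    · exact hc.exists_isLinkedTriple
    · exact exists_isLinkedTriple_of_three_le_ncard_neighborSet hdeg
  exact ⟨⟨v₁, v₂, v₃, h⟩, h.inT_one hG⟩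

theorem stmt9 {V : Type} [Fintype V] (G : SimpleGraph V) (hG : G.Connected) (t : ℕ)
    (hcard : Fintype.card V ≤ t)
    (hyp : (∃ (v : V) (c : G.Walk v v), c.IsCycle) ∨ ∃ v : V, 3 ≤ (G.neighborSet v).ncard) :
    (∃ v₁ v₂ v₃ : V, v₁ ≠ v₂ ∧ v₁ ≠ v₃ ∧ v₂ ≠ v₃ ∧
      (∃ p : G.Walk v₁ v₂, p.IsPath ∧ v₃ ∉ p.support) ∧
      (∃ p : G.Walk v₁ v₃, p.IsPath ∧ v₂ ∉ p.support) ∧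
      (∃ p : G.Walk v₂ v₃, p.IsPath ∧ v₁ ∉ p.support)) ∧ InT 1 G :=
  stmt9_general G hG hyp
end

section
/- Every connected supergraph (on the same or larger vertex set, containing the graph as an induced subgraph via a vertex subset) of a graph in T_h also belongs to T_h; precisely, if G is connected, X ⊆ V(G), and G[X] ∈ T_h, then G ∈ T_h. -/
open SimpleGraph

/-!
A witness for `G[X] ∈ 𝒯_{h+1}` (three vertex sets and the linking paths) is also a witness
for `G`: the sets induce the same graphs in `G` as in `G[X]`, and paths of `G[X]` are paths
of `G`. Connectivity of `G` is the only new requirement at the top level.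
-/

namespace SimpleGraph.Embedding

variable {V W : Type} {G : SimpleGraph V} {H : SimpleGraph W}

noncomputable def induceImage (f : G ↪g H) (s : Set V) : G.induce s ≃g H.induce (f '' s) where
  toEquiv := Equiv.Set.imageOfInjOn f s f.injective.injOn
  map_rel_iff' := by simp [Equiv.Set.imageOfInjOn, f.map_adj_iff]

end SimpleGraph.Embedding

lemma LinkedAvoiding.image {V W : Type} {G : SimpleGraph V} {H : SimpleGraph W}
    (f : G ↪g H) {A B C : Set V} (hl : LinkedAvoiding G A B C) :
    LinkedAvoiding H (f '' A) (f '' B) (f '' C) := by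
  obtain ⟨a, ha, b, hb, p, hp⟩ := hl
  refine ⟨f a, Set.mem_image_of_mem f ha, f b, Set.mem_image_of_mem f hb, p.map f.toHom, ?_⟩
  rintro _ hx ⟨c, hc, hcx⟩
  rw [Walk.support_map, List.mem_map] at hx
  obtain ⟨y, hy, rfl⟩ := hx
  exact hp y hy (f.injective hcx ▸ hc)

lemma InT.of_embedding {V W : Type} {G : SimpleGraph V} {H : SimpleGraph W} {h : ℕ}
    (f : G ↪g H) (hH : H.Connected) (hG : InT h G) : InT h H := by
  induction h generalizing V W with
  | zero => exact hH
  | succ h ih =>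
    obtain ⟨-, V₁, V₂, V₃, d₁₂, d₁₃, d₂₃, h₁, h₂, h₃, l₁₂, l₁₃, l₂₃⟩ := hG
    have part {U : Set V} (hU : InT h (G.induce U)) : InT h (H.induce (f '' U)) :=
      ih (f.induceImage U).toEmbedding ((f.induceImage U).connected_iff.mp hU.connected) hU
    exact ⟨hH, f '' V₁, f '' V₂, f '' V₃,
      (Set.disjoint_image_iff f.injective).mpr d₁₂,
      (Set.disjoint_image_iff f.injective).mpr d₁₃,
      (Set.disjoint_image_iff f.injective).mpr d₂₃,
      part h₁, part h₂, part h₃, l₁₂.image f, l₁₃.image f, l₂₃.image f⟩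

theorem stmt13 {V : Type} (G : SimpleGraph V) (hG : G.Connected) (X : Set V) (h : ℕ)
    (hX : InT h (G.induce X)) : InT h G :=
  hX.of_embedding (Embedding.induce X) hG
end

section
/- For every positive integer t and every tree T on at least two vertices, the graph B(T), obtained by replacing every node of T by a clique on t vertices and every edge of T by a perfect matching between the corresponding cliques, has treewidth exactly t. -/
open SimpleGraph

/-!
Upper bound: root the tree and replace each node `x` by a path `(x, 0), …, (x, t)` hung below
`(parent x, 0)`. Along this path the clique of `x` is traded, one vertex at a time, for the clique
of its parent, every vertex `(x, a)` leaving one step after its matched partner has entered; so the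
bags have at most `t + 1` vertices, and each matching edge lies in a bag.

Lower bound: the nodes whose bags contain a given vertex form a subtree, and subtrees have the
Helly property. For an edge `xy` of the tree, apply it to the subtrees of the vertices of the
clique of `x` together with the union of the subtrees of the clique of `y` (a subtree, as these
pairwise meet): some bag contains the clique of `x` and a vertex of the clique of `y`, that is
`t + 1` vertices.
-/

namespace SimpleGraph

variable {V : Type*} {G : SimpleGraph V}

/-- In a tree, the path-convex sets are the vertex sets of subtrees. -/
def IsPathConvex (G : SimpleGraph V) (S : Set V) : Prop :=
  ∀ ⦃u v : V⦄ (p : G.Walk u v), p.IsPath → u ∈ S → v ∈ S → ∀ w ∈ p.support, w ∈ S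

lemma IsPathConvex.inter {A B : Set V} (hA : G.IsPathConvex A) (hB : G.IsPathConvex B) :
    G.IsPathConvex (A ∩ B) :=
  fun _ _ p hp hu hv w hw => ⟨hA p hp hu.1 hv.1 w hw, hB p hp hu.2 hv.2 w hw⟩

lemma IsAcyclic.support_subset_support (hG : G.IsAcyclic) {u v : V} {p : G.Walk u v}
    (hp : p.IsPath) (q : G.Walk u v) : p.support ⊆ q.support := by
  classical
  obtain rfl : p = q.bypass := congrArg Subtype.val <|
    (hG.subsingleton_path u v).elim ⟨p, hp⟩ ⟨q.bypass, q.bypass_isPath⟩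
  exact q.support_bypass_subset_support

lemma IsAcyclic.isPathConvex_of_preconnected_induce (hG : G.IsAcyclic) {S : Set V}
    (hS : (G.induce S).Preconnected) : G.IsPathConvex S := by
  intro u v p hp hu hv w hw
  obtain ⟨q⟩ := hS ⟨u, hu⟩ ⟨v, hv⟩
  have hw' : w ∈ (q.map (Embedding.induce S).toHom).support :=
    hG.support_subset_support hp _ hw
  rw [Walk.support_map, List.mem_map] at hw'
  obtain ⟨w', -, rfl⟩ := hw'
  exact w'.2

lemma IsTree.isPathConvex_biUnion {κ : Type*} (hG : G.IsTree) {F : κ → Set V} {s : Set κ}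
    (hF : ∀ i ∈ s, G.IsPathConvex (F i)) (hFF : ∀ i ∈ s, ∀ j ∈ s, (F i ∩ F j).Nonempty) :
    G.IsPathConvex (⋃ i ∈ s, F i) := by
  classical
  intro u v p hp hu hv w hw
  simp only [Set.mem_iUnion] at hu hv ⊢
  obtain ⟨i, hi, hui⟩ := hu
  obtain ⟨j, hj, hvj⟩ := hv
  obtain ⟨m, hmi, hmj⟩ := hFF i hi j hj
  obtain ⟨q₁⟩ := hG.connected.preconnected u m
  obtain ⟨q₂⟩ := hG.connected.preconnected m v
  have hw' := hG.isAcyclic.support_subset_support hp (q₁.bypass.append q₂.bypass) hw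
  rcases (Walk.mem_support_append_iff _ _).mp hw' with hw₁ | hw₂
  · exact ⟨i, hi, hF i hi _ q₁.bypass_isPath hui hmi w hw₁⟩
  · exact ⟨j, hj, hF j hj _ q₂.bypass_isPath hmj hvj w hw₂⟩

lemma IsPathConvex.mem_or_mem_of_adj (hG : G.Preconnected) {A B : Set V}
    (hA : G.IsPathConvex A) (hB : G.IsPathConvex B) (hAB : (A ∩ B).Nonempty) {u v : V}
    (hu : u ∈ A) (hv : v ∈ B) (huv : G.Adj u v) : u ∈ B ∨ v ∈ A := by
  classical
  obtain ⟨m, hmA, hmB⟩ := hAB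
  obtain ⟨q⟩ := hG v m
  by_cases huq : u ∈ q.bypass.support
  · exact Or.inl (hB _ q.bypass_isPath hv hmB u huq)
  · exact Or.inr (hA (.cons huv q.bypass) (q.bypass_isPath.cons huq) hu hmA v (by simp))

lemma Walk.exists_mem_support_inter {A B : Set V}
    (hcross : ∀ ⦃u v⦄, G.Adj u v → u ∈ A → v ∈ B → u ∈ B ∨ v ∈ A) :
    ∀ {a b : V} (p : G.Walk a b), (∀ w ∈ p.support, w ∈ A ∪ B) → a ∈ A → b ∈ B →
      ∃ w ∈ p.support, w ∈ A ∩ B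
  | _, _, .nil, _, ha, hb => ⟨_, by simp, ha, hb⟩
  | a, _, .cons (v := c) h p, hp, ha, hb => by
    have hrec : c ∈ A → ∃ w ∈ (Walk.cons h p).support, w ∈ A ∩ B := fun hc => by
      obtain ⟨w, hw, hwAB⟩ :=
        exists_mem_support_inter hcross p (fun w hw => hp w (by simp [hw])) hc hb
      exact ⟨w, by simp [hw], hwAB⟩
    by_cases haB : a ∈ B
    · exact ⟨a, by simp, ha, haB⟩
    rcases hp c (by simp) with hcA | hcB
    · exact hrec hcA
    · exact ((hcross h ha hcB).resolve_left haB) |> hrec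

lemma IsPathConvex.inter_inter_nonempty (hG : G.Preconnected) {A B C : Set V}
    (hA : G.IsPathConvex A) (hB : G.IsPathConvex B) (hC : G.IsPathConvex C)
    (hAB : (A ∩ B).Nonempty) (hAC : (A ∩ C).Nonempty) (hBC : (B ∩ C).Nonempty) :
    (A ∩ B ∩ C).Nonempty := by
  classical
  obtain ⟨c, hcA, hcB⟩ := hAB
  obtain ⟨b, hbA, hbC⟩ := hAC
  obtain ⟨a, haB, haC⟩ := hBC
  obtain ⟨q₁⟩ := hG b c
  obtain ⟨q₂⟩ := hG c a
  let p := (q₁.bypass.append q₂.bypass).bypass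
  have hpAB : ∀ w ∈ p.support, w ∈ A ∪ B := fun w hw => by
    rcases (Walk.mem_support_append_iff _ _).mp (Walk.support_bypass_subset_support _ hw) with h | h
    · exact Or.inl (hA _ q₁.bypass_isPath hbA hcA w h)
    · exact Or.inr (hB _ q₂.bypass_isPath hcB haB w h)
  obtain ⟨w, hw, hwAB⟩ := Walk.exists_mem_support_inter
    (fun _ _ h hu hv => hA.mem_or_mem_of_adj hG hB ⟨c, hcA, hcB⟩ hu hv h) p hpAB hbA haB
  exact ⟨w, hwAB, hC p (Walk.bypass_isPath _) hbC haC w hw⟩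

/-- The Helly property of path-convex sets, relative to a set `C` so that the induction goes
through. -/
lemma IsPathConvex.exists_mem_forall_mem (hG : G.Preconnected) {κ : Type*} {F : κ → Set V}
    (s : Finset κ) (hF : ∀ i ∈ s, G.IsPathConvex (F i))
    (hFF : ∀ i ∈ s, ∀ j ∈ s, (F i ∩ F j).Nonempty) {C : Set V} (hC : G.IsPathConvex C)
    (hCne : C.Nonempty) (hCF : ∀ i ∈ s, (C ∩ F i).Nonempty) :
    ∃ n ∈ C, ∀ i ∈ s, n ∈ F i := by
  classical
  induction s using Finset.induction_on generalizing C with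
  | empty => exact hCne.imp fun n hn => ⟨hn, by simp⟩
  | insert j s _ ih =>
    obtain ⟨n, ⟨hnC, hnj⟩, hns⟩ := ih (fun i hi => hF i (by simp [hi]))
      (fun i hi k hk => hFF i (by simp [hi]) k (by simp [hk])) (hC.inter (hF j (by simp)))
      (hCF j (by simp)) fun i hi => hC.inter_inter_nonempty hG (hF j (by simp))
        (hF i (by simp [hi])) (hCF j (by simp)) (hCF i (by simp [hi]))
        (hFF j (by simp) i (by simp [hi]))
    exact ⟨n, hnC, by simpa [hnj] using hns⟩

lemma induce_connected_of_exists_adj_lt (G : SimpleGraph V) {S : Set V} {c : V} (hc : c ∈ S)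
    (f : V → ℕ) (h : ∀ a ∈ S, a ≠ c → ∃ b ∈ S, G.Adj a b ∧ f b < f a) :
    (G.induce S).Connected := by
  have hreach (n : ℕ) : ∀ a (ha : a ∈ S), f a = n → (G.induce S).Reachable ⟨a, ha⟩ ⟨c, hc⟩ := by
    induction n using Nat.strong_induction_on with
    | _ n ih =>
      intro a ha hn
      by_cases hac : a = c
      · subst hac; rfl
      obtain ⟨b, hb, hab, hlt⟩ := h a ha hac
      exact (show (G.induce S).Adj ⟨a, ha⟩ ⟨b, hb⟩ from hab).reachable.trans
        (ih (f b) (hn ▸ hlt) b hb rfl)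
  have : Nonempty S := ⟨⟨c, hc⟩⟩
  exact ⟨fun a b => (hreach _ a.1 a.2 rfl).trans (hreach _ b.1 b.2 rfl).symm⟩

def parentGraph (P : V → V) (root : V) : SimpleGraph V :=
  fromRel fun a b => a ≠ root ∧ b = P a

lemma parentGraph_adj {P : V → V} {root : V} {d : V → ℕ}
    (hd : ∀ a, a ≠ root → d (P a) < d a) {a : V} (ha : a ≠ root) :
    (parentGraph P root).Adj a (P a) :=
  ⟨fun h => (hd a ha).ne (congrArg d h).symm, Or.inl ⟨ha, rfl⟩⟩

lemma parentGraph_isTree [Finite V] {P : V → V} {root : V} {d : V → ℕ}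
    (hd : ∀ a, a ≠ root → d (P a) < d a) :
    (parentGraph P root).IsTree := by
  classical
  rw [isTree_iff_connected_and_card]
  refine ⟨(induceUnivIso _).connected_iff.mp <| induce_connected_of_exists_adj_lt _
    (Set.mem_univ root) d fun a _ ha => ⟨P a, trivial, parentGraph_adj hd ha, hd a ha⟩, ?_⟩
  let e : {a // a ≠ root} → (parentGraph P root).edgeSet :=
    fun a => ⟨s(a.1, P a.1), parentGraph_adj hd a.2⟩
  have he : e.Bijective := by
    constructor
    · rintro ⟨a, ha⟩ ⟨b, hb⟩ hab
      rcases Sym2.eq_iff.mp (congrArg Subtype.val hab) with h | ⟨hab, hba⟩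
      · exact Subtype.ext h.1
      · dsimp only at hab hba
        have h₁ := hd a ha
        have h₂ := hd b hb
        rw [hba] at h₁
        rw [← hab] at h₂
        omega
    · rintro ⟨e, he⟩
      induction e using Sym2.ind with
      | _ u v =>
        rcases he.2 with ⟨hu, hv⟩ | ⟨hv, hu⟩
        · dsimp only at hu hv
          subst hv
          exact ⟨⟨u, hu⟩, rfl⟩
        · dsimp only at hu hv
          subst hu
          exact ⟨⟨v, hv⟩, Subtype.ext Sym2.eq_swap⟩
  rw [← Nat.card_congr (Equiv.ofBijective e he), ← Finite.card_option,
    Nat.card_congr (Equiv.optionSubtypeNe root)]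

lemma IsTree.penultimate_eq_of_adj (hG : G.IsTree) {r x y : V} {p : G.Walk r x} (hp : p.IsPath)
    (hxy : G.Adj x y) (hdist : G.dist r y < G.dist r x) : p.penultimate = y := by
  classical
  obtain ⟨q, hq, hqlen⟩ := hG.connected.exists_path_of_dist r y
  have hxq : x ∉ q.support := fun hx => by
    have := (G.dist_le (q.takeUntil x hx)).trans (q.length_takeUntil_le_length hx)
    omega
  exact (hG.isAcyclic.eq_penultimate_of_adj_end hp hxy
    (hG.isAcyclic.mem_support_of_ne_mem_support_of_adj_of_isPath hp hq hxy hxq)).symm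

structure Rooting (G : SimpleGraph V) where
  root : V
  parent : V → V
  depth : V → ℕ
  parent_root : parent root = root
  adj_parent : ∀ x, x ≠ root → G.Adj x (parent x)
  depth_parent_lt : ∀ x, x ≠ root → depth (parent x) < depth x
  parent_eq_or_parent_eq : ∀ ⦃x y⦄, G.Adj x y →
    (x ≠ root ∧ parent x = y) ∨ (y ≠ root ∧ parent y = x)

lemma IsTree.nonempty_rooting (hG : G.IsTree) : Nonempty G.Rooting := by
  obtain ⟨r⟩ := hG.connected.nonempty
  choose p hp hplen using hG.connected.exists_path_of_dist r
  have hpnil {x : V} (hx : x ≠ r) : ¬(p x).Nil := fun h => hx h.eq.symm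
  have hdist {x : V} (hx : x ≠ r) : G.dist r (p x).penultimate < G.dist r x := by
    have := G.dist_le (p x).dropLast
    rw [Walk.length_dropLast, hplen] at this
    have := G.dist_ne_zero_iff_ne_and_reachable.mpr ⟨Ne.symm hx, hG.connected r x⟩
    omega
  refine ⟨⟨r, fun x => (p x).penultimate, G.dist r, ?_, fun x hx => (Walk.adj_penultimate
    (hpnil hx)).symm, fun x hx => hdist hx, fun x y hxy => ?_⟩⟩
  · have : (p r).length = 0 := by rw [hplen, dist_self]
    simp [Walk.penultimate, this]
  · rcases hG.dist_eq_dist_add_one_of_adj r hxy with h | h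
    · refine Or.inl ⟨fun hx => ?_, hG.penultimate_eq_of_adj (hp x) hxy (by omega)⟩
      subst hx
      simp at h
    · refine Or.inr ⟨fun hy => ?_, hG.penultimate_eq_of_adj (hp y) hxy.symm (by omega)⟩
      subst hy
      simp at h

end SimpleGraph

namespace TreeDecomp

variable {V : Type} {G : SimpleGraph V} (D : TreeDecomp G)

lemma isPathConvex_bag (v : V) : D.tree.IsPathConvex {n | v ∈ D.bag n} :=
  D.isTree.isAcyclic.isPathConvex_of_preconnected_induce (D.bagConn v).preconnected

lemma bag_inter_nonempty_of_isClique {K : Set V} (hK : G.IsClique K) {u v : V} (hu : u ∈ K)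
    (hv : v ∈ K) : ({n | u ∈ D.bag n} ∩ {n | v ∈ D.bag n}).Nonempty := by
  by_cases huv : u = v
  · subst huv
    exact (D.covers u).imp fun n hn => ⟨hn, hn⟩
  · exact D.coversEdge (hK hu hv huv)

lemma exists_bag_superset_of_isClique {K S : Finset V} (hK : G.IsClique (K : Set V))
    (hS : G.IsClique (S : Set V)) (hSne : S.Nonempty) (hKS : ∀ u ∈ K, ∃ v ∈ S, G.Adj u v) :
    ∃ n, K ⊆ D.bag n ∧ ∃ v ∈ S, v ∈ D.bag n := by
  have hU : D.tree.IsPathConvex (⋃ v ∈ (S : Set V), {n | v ∈ D.bag n}) :=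
    D.isTree.isPathConvex_biUnion (fun v _ => D.isPathConvex_bag v)
      fun _ hv _ hw => D.bag_inter_nonempty_of_isClique hS hv hw
  obtain ⟨v, hv⟩ := hSne
  obtain ⟨n, hnU, hnK⟩ := SimpleGraph.IsPathConvex.exists_mem_forall_mem
    D.isTree.connected.preconnected K (fun u _ => D.isPathConvex_bag u)
    (fun _ hu _ hw => D.bag_inter_nonempty_of_isClique hK hu hw) hU
    ((D.covers v).imp fun n hn => Set.mem_biUnion hv hn)
    fun u hu => by
      obtain ⟨w, hw, huw⟩ := hKS u hu
      obtain ⟨n, hun, hwn⟩ := D.coversEdge huw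
      exact ⟨n, Set.mem_biUnion hw hwn, hun⟩
  simp only [Set.mem_iUnion] at hnU
  obtain ⟨w, hw, hwn⟩ := hnU
  exact ⟨n, hnK, w, hw, hwn⟩

end TreeDecomp

lemma TwLE.card_le_of_isClique {V : Type} {G : SimpleGraph V} {k : ℕ} (hk : TwLE G k)
    {K S : Finset V} (hK : G.IsClique (K : Set V)) (hS : G.IsClique (S : Set V))
    (hKS : ∀ u ∈ K, ∃ v ∈ S, G.Adj u v) (hdisj : Disjoint K S) : K.card ≤ k := by
  classical
  obtain rfl | ⟨u, hu⟩ := K.eq_empty_or_nonempty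
  · simp
  obtain ⟨D, hD⟩ := hk
  obtain ⟨v, hv, -⟩ := hKS u hu
  obtain ⟨n, hKn, w, hw, hwn⟩ := D.exists_bag_superset_of_isClique hK hS ⟨v, hv⟩ hKS
  have hwK : w ∉ K := Finset.disjoint_right.mp hdisj hw
  suffices K.card + 1 ≤ k + 1 by omega
  calc K.card + 1 = (insert w K).card := (Finset.card_insert_of_notMem hwK).symm
    _ ≤ (D.bag n).card := Finset.card_le_card (Finset.insert_subset hwn hKn)
    _ ≤ k + 1 := hD n

lemma le_of_blowup_le_of_twLE {t : ℕ} {ι : Type} {τ : SimpleGraph ι} (hτ : τ.Preconnected)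
    (h2 : ∃ x y : ι, x ≠ y) (M : ∀ ⦃x y⦄, τ.Adj x y → (Fin t ≃ Fin t))
    {G : SimpleGraph (ι × Fin t)}
    (hG : ∀ a b, ((a.1 = b.1 ∧ a.2 ≠ b.2) ∨ ∃ hxy : τ.Adj a.1 b.1, M hxy a.2 = b.2) → G.Adj a b)
    {k : ℕ} (hk : TwLE G k) : t ≤ k := by
  obtain ⟨x₀, y₀, hne⟩ := h2
  have : Nontrivial ι := ⟨⟨x₀, y₀, hne⟩⟩
  obtain ⟨x, y, hxy⟩ : ∃ x y, τ.Adj x y := ⟨x₀, hτ.exists_adj_of_nontrivial x₀⟩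
  have hclique (z : ι) : G.IsClique (({z} ×ˢ Finset.univ : Finset (ι × Fin t)) : Set _) := by
    intro a ha b hb hab
    simp only [Finset.coe_product, Finset.coe_singleton, Finset.coe_univ, Set.mem_prod,
      Set.mem_singleton_iff] at ha hb
    exact hG a b (Or.inl ⟨ha.1.trans hb.1.symm, fun h => hab (Prod.ext (ha.1.trans hb.1.symm) h)⟩)
  have hcard := hk.card_le_of_isClique (hclique x) (hclique y) ?_ ?_
  · simpa using hcard
  · intro a ha
    simp only [Finset.mem_product, Finset.mem_singleton] at ha
    refine ⟨(y, M (ha.1 ▸ hxy) a.2), by simp, hG _ _ (Or.inr ⟨ha.1 ▸ hxy, rfl⟩)⟩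
  · rw [Finset.disjoint_left]
    intro a ha hb
    simp only [Finset.mem_product, Finset.mem_singleton] at ha hb
    exact hxy.ne (ha.1.symm.trans hb.1)

namespace SimpleGraph.Rooting

variable {ι : Type} {τ : SimpleGraph ι} {t : ℕ} (R : τ.Rooting)
  (M : ∀ ⦃x y⦄, τ.Adj x y → (Fin t ≃ Fin t))

open scoped Classical in
noncomputable def parentMatching (x : ι) : Fin t ≃ Fin t :=
  if h : x = R.root then Equiv.refl _ else M (R.adj_parent x h)

lemma parentMatching_of_ne {x : ι} (hx : x ≠ R.root) :
    R.parentMatching M x = M (R.adj_parent x hx) :=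
  dif_neg hx

def stepUp (s : ι × Fin (t + 1)) : ι × Fin (t + 1) :=
  if h : (s.2 : ℕ) < t then (s.1, ⟨s.2 + 1, by omega⟩) else (R.parent s.1, 0)

lemma stepUp_of_lt {x : ι} {i : Fin (t + 1)} (hi : (i : ℕ) < t) :
    R.stepUp (x, i) = (x, ⟨i + 1, by omega⟩) :=
  dif_pos hi

lemma stepUp_last (x : ι) : R.stepUp (x, Fin.last t) = (R.parent x, 0) :=
  dif_neg (by simp)

def rank (s : ι × Fin (t + 1)) : ℕ := (t + 1) * R.depth s.1 + (t - s.2)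

lemma rank_stepUp_lt {s : ι × Fin (t + 1)} (hs : s ≠ (R.root, Fin.last t)) :
    R.rank (R.stepUp s) < R.rank s := by
  obtain ⟨x, i⟩ := s
  by_cases hi : (i : ℕ) < t
  · rw [R.stepUp_of_lt hi, rank, rank]
    dsimp only
    omega
  · obtain rfl : i = Fin.last t := Fin.ext (by simp; omega)
    have hx : x ≠ R.root := fun h => hs (by rw [h])
    have := R.depth_parent_lt x hx
    rw [R.stepUp_last, rank, rank]
    simp only [Fin.val_last, Fin.val_zero, Nat.sub_self, Nat.sub_zero, Nat.add_zero]
    nlinarith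

def decompTree (t : ℕ) : SimpleGraph (ι × Fin (t + 1)) :=
  parentGraph R.stepUp (R.root, Fin.last t)

lemma decompTree_isTree [Finite ι] : (R.decompTree t).IsTree :=
  parentGraph_isTree fun _ => R.rank_stepUp_lt

lemma decompTree_adj_stepUp {s : ι × Fin (t + 1)} (hs : s ≠ (R.root, Fin.last t)) :
    (R.decompTree t).Adj s (R.stepUp s) :=
  parentGraph_adj (fun _ => R.rank_stepUp_lt) hs

open scoped Classical in
noncomputable def swapBag (s : ι × Fin (t + 1)) : Finset (ι × Fin t) :=
  ((Finset.univ.filter fun a : Fin t => (s.2 : ℕ) ≤ a + 1).image fun a => (s.1, a)) ∪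
    (Finset.univ.filter fun a : Fin t => (a : ℕ) < s.2).image
      fun a => (R.parent s.1, R.parentMatching M s.1 a)

lemma mem_swapBag {s : ι × Fin (t + 1)} {v : ι × Fin t} :
    v ∈ R.swapBag M s ↔ (v.1 = s.1 ∧ (s.2 : ℕ) ≤ v.2 + 1) ∨
      (v.1 = R.parent s.1 ∧ ((R.parentMatching M s.1).symm v.2 : ℕ) < s.2) := by
  obtain ⟨y, b⟩ := v
  simp only [swapBag, Finset.mem_union, Finset.mem_image, Finset.mem_filter, Finset.mem_univ,
    true_and, Prod.mk.injEq, ← Equiv.eq_symm_apply]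
  constructor
  · rintro (⟨a, ha, rfl, rfl⟩ | ⟨a, ha, rfl, rfl⟩) <;> simp_all
  · rintro (⟨rfl, hb⟩ | ⟨rfl, hb⟩)
    · exact Or.inl ⟨b, hb, rfl, rfl⟩
    · exact Or.inr ⟨_, hb, rfl, rfl⟩

lemma card_swapBag_le (s : ι × Fin (t + 1)) : (R.swapBag M s).card ≤ t + 1 := by
  classical
  have hlow : (Finset.univ.filter fun a : Fin t => (s.2 : ℕ) ≤ a + 1) =
      Finset.univ.filter fun a : Fin t => ¬ (a : ℕ) < s.2 - 1 :=
    Finset.filter_congr fun a _ => by omega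
  have hsplit := Finset.card_filter_add_card_filter_not (s := Finset.univ)
    fun a : Fin t => (a : ℕ) < s.2 - 1
  have hhigh := Fin.card_filter_val_lt (n := t) (m := s.2)
  have hmid := Fin.card_filter_val_lt (n := t) (m := s.2 - 1)
  have := s.2.isLt
  calc (R.swapBag M s).card
      ≤ (Finset.univ.filter fun a : Fin t => (s.2 : ℕ) ≤ a + 1).card +
          (Finset.univ.filter fun a : Fin t => (a : ℕ) < s.2).card :=
        (Finset.card_union_le _ _).trans (add_le_add Finset.card_image_le Finset.card_image_le)
    _ ≤ t + 1 := by
        rw [hlow]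
        simp only [Finset.card_univ, Fintype.card_fin] at hsplit
        omega

lemma mem_swapBag_root (i : Fin (t + 1)) (b : Fin t) : (R.root, b) ∈ R.swapBag M (R.root, i) := by
  rw [mem_swapBag, R.parent_root, parentMatching, dif_pos rfl]
  simp only [Equiv.refl_symm, Equiv.refl_apply, true_and]
  omega

lemma mem_swapBag_zero (v : ι × Fin t) : v ∈ R.swapBag M (v.1, 0) := by
  simp [mem_swapBag]

lemma exists_mem_swapBag_of_adj (hM : ∀ ⦃x y⦄ (hxy : τ.Adj x y), M hxy.symm = (M hxy).symm)
    {u v : ι × Fin t} (huv : u.1 = v.1 ∨ ∃ hxy : τ.Adj u.1 v.1, M hxy u.2 = v.2) :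
    ∃ s, u ∈ R.swapBag M s ∧ v ∈ R.swapBag M s := by
  obtain ⟨x, a⟩ := u
  obtain ⟨y, b⟩ := v
  dsimp only at huv
  rcases huv with rfl | ⟨hxy, rfl⟩
  · exact ⟨(x, 0), R.mem_swapBag_zero M _, R.mem_swapBag_zero M _⟩
  rcases R.parent_eq_or_parent_eq hxy with ⟨hx, rfl⟩ | ⟨hy, rfl⟩
  · have hmatch : R.parentMatching M x = M hxy := R.parentMatching_of_ne M hx
    exact ⟨(x, ⟨a + 1, by omega⟩), by simp [mem_swapBag], by simp [mem_swapBag, hmatch]⟩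
  · have hmatch : R.parentMatching M y = (M hxy).symm :=
      (R.parentMatching_of_ne M hy).trans (hM hxy)
    exact ⟨(y, ⟨M hxy a + 1, by omega⟩), by simp [mem_swapBag, hmatch], by simp [mem_swapBag]⟩

lemma induce_swapBag_connected (v : ι × Fin t) :
    ((R.decompTree t).induce {s | v ∈ R.swapBag M s}).Connected := by
  classical
  obtain ⟨x₀, b⟩ := v
  -- Descend to `(x₀, 0)` along the path of `x₀`, or along the path of a child of `x₀` and then
  -- from its top `(child, t)` to `(x₀, 0)`.
  refine induce_connected_of_exists_adj_lt _ (c := (x₀, 0)) (R.mem_swapBag_zero M (x₀, b))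
    (fun s => if s.1 = x₀ then s.2 else 2 * t + 2 - s.2) ?_
  rintro ⟨y, i⟩ hs hne
  have hi := i.isLt
  simp only [Set.mem_ofPred_eq, mem_swapBag] at hs ⊢
  by_cases hy : y = x₀
  · subst hy
    have hi0 : (i : ℕ) ≠ 0 := fun h => hne (Prod.ext rfl (Fin.ext h))
    have hstep : R.stepUp (y, ⟨i - 1, by omega⟩) = (y, i) := by
      rw [R.stepUp_of_lt (by dsimp only; omega)]
      exact Prod.ext rfl (Fin.ext (by dsimp only; omega))
    refine ⟨(y, ⟨i - 1, by omega⟩), ?_, ?_, by dsimp only; rw [if_pos rfl, if_pos rfl]; omega⟩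
    · by_cases hyr : y = R.root
      · subst hyr
        simpa [mem_swapBag] using R.mem_swapBag_root M ⟨i - 1, by omega⟩ b
      · have := (R.adj_parent y hyr).ne
        rcases hs with ⟨-, hib⟩ | ⟨hyy, -⟩
        · exact Or.inl ⟨rfl, by dsimp only; omega⟩
        · exact absurd hyy this
    · have := R.decompTree_adj_stepUp (t := t) (s := (y, ⟨i - 1, by omega⟩))
        (by simp [Prod.ext_iff, Fin.ext_iff]; omega)
      rw [hstep] at this
      exact this.symm
  · obtain ⟨hpar, hib⟩ := hs.resolve_left fun h => hy h.1.symm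
    have hyr : y ≠ R.root := fun h => hy (by rw [h, ← R.parent_root, ← h, hpar])
    have hyroot : (y, i) ≠ (R.root, Fin.last t) := by simp [hyr]
    by_cases hit : (i : ℕ) < t
    · refine ⟨(y, ⟨i + 1, by omega⟩), Or.inr ⟨hpar, by dsimp only; omega⟩, ?_, by simp [hy]; omega⟩
      simpa [R.stepUp_of_lt hit] using R.decompTree_adj_stepUp hyroot
    · obtain rfl : i = Fin.last t := Fin.ext (by simp; omega)
      refine ⟨(x₀, 0), Or.inl ⟨rfl, by simp⟩, ?_, by simp [hy]; omega⟩
      simpa [R.stepUp_last, hpar] using R.decompTree_adj_stepUp hyroot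

end SimpleGraph.Rooting

theorem twLE_of_le_blowup {t : ℕ} {ι : Type} [Finite ι] {τ : SimpleGraph ι} (hτ : τ.IsTree)
    (M : ∀ ⦃x y⦄, τ.Adj x y → (Fin t ≃ Fin t))
    (hM : ∀ ⦃x y⦄ (hxy : τ.Adj x y), M hxy.symm = (M hxy).symm) {G : SimpleGraph (ι × Fin t)}
    (hG : ∀ a b, G.Adj a b → a.1 = b.1 ∨ ∃ hxy : τ.Adj a.1 b.1, M hxy a.2 = b.2) :
    TwLE G t := by
  obtain ⟨R⟩ := hτ.nonempty_rooting
  exact ⟨⟨_, R.decompTree t, R.decompTree_isTree, R.swapBag M, fun v => ⟨_, R.mem_swapBag_zero M v⟩,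
    fun _ _ h => R.exists_mem_swapBag_of_adj M hM (hG _ _ h), R.induce_swapBag_connected M⟩,
    R.card_swapBag_le M⟩

theorem stmt14_general (t : ℕ) {ι : Type} [Fintype ι]
    (τ : SimpleGraph ι) (hτ : τ.IsTree) (h2 : ∃ x y : ι, x ≠ y)
    (M : ∀ ⦃x y⦄, τ.Adj x y → (Fin t ≃ Fin t))
    (hM : ∀ ⦃x y⦄ (hxy : τ.Adj x y), M hxy.symm = (M hxy).symm)
    (G : SimpleGraph (ι × Fin t))
    (hG : ∀ a b, G.Adj a b ↔
      (a.1 = b.1 ∧ a.2 ≠ b.2) ∨ ∃ hxy : τ.Adj a.1 b.1, M hxy a.2 = b.2) :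
    TwLE G t ∧ ∀ k, TwLE G k → t ≤ k :=
  ⟨twLE_of_le_blowup hτ M hM fun a b h => ((hG a b).mp h).imp_left And.left,
    fun _ hk => le_of_blowup_le_of_twLE hτ.connected.preconnected h2 M (fun a b => (hG a b).mpr) hk⟩

theorem stmt14 (t : ℕ) (ht : 1 ≤ t) {ι : Type} [Fintype ι]
    (τ : SimpleGraph ι) (hτ : τ.IsTree) (h2 : ∃ x y : ι, x ≠ y)
    (M : ∀ ⦃x y⦄, τ.Adj x y → (Fin t ≃ Fin t))
    (hM : ∀ ⦃x y⦄ (hxy : τ.Adj x y), M hxy.symm = (M hxy).symm)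
    (G : SimpleGraph (ι × Fin t))
    (hG : ∀ a b, G.Adj a b ↔
      (a.1 = b.1 ∧ a.2 ≠ b.2) ∨ ∃ hxy : τ.Adj a.1 b.1, M hxy a.2 = b.2) :
    TwLE G t ∧ ∀ k, TwLE G k → t ≤ k :=
  stmt14_general t τ hτ h2 M hM G hG
end

section
/- For every positive integer t and every h ≥ 0, the graph B(T_h), where T_h is the complete ternary tree of height h, has pathwidth at least t(h+1) - 1. -/
open SimpleGraph

/-!
Write `T_x` for the vertices of `B(T_h)` lying over the subtree of `T_h` rooted at `x`. Deleting
fewer than `t` vertices leaves `T_x` connected, and likewise `T_x` minus the part below one child: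
a surviving vertex below a child `bx` is joined inside `T_{bx}` to one of the `t` disjoint matched
pairs `(bx, σ i)`, `(x, i)` that the deletion misses, and what survives of the clique over `x` is
connected.

Induction on the height of `x` then gives a bag containing `t (n + 1)` vertices of `T_x`, where
`n = h - |x|`. In the step, order the bags found for the three children as `j_a ≤ j_c ≤ j_d`. If
bag `j_c` held fewer than `t` vertices of `T_x \ T_{cx}`, then `j_a` and `j_d` would each contain
a vertex of `T_{ax}`, resp. `T_{dx}`, outside bag `j_c`, and a path between them in
`T_x \ T_{cx}` avoiding bag `j_c` would contradict the interpolation property of a path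
decomposition. So bag `j_c` has `t + t (n + 1)` vertices of `T_x`.
-/

open SimpleGraph Finset

section PathDecomp

variable {V : Type} {G : SimpleGraph V}

theorem PathDecomp.exists_mem_support_mem_bag_s15 (P : PathDecomp G) {u v : V} (p : G.Walk u v)
    {i j k : Fin P.n} (hij : i ≤ j) (hjk : j ≤ k) (hu : u ∈ P.bag i) (hv : v ∈ P.bag k) :
    ∃ z ∈ p.support, z ∈ P.bag j := by
  induction p generalizing i with
  | nil => exact ⟨_, by simp, P.consecutive _ i j k hij hjk hu hv⟩
  | @cons a b c hab q ih =>
    obtain ⟨m, ham, hbm⟩ := P.coversEdge hab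
    rcases le_total m j with hmj | hjm
    · obtain ⟨z, hz, hzj⟩ := ih hmj hbm hv
      exact ⟨z, by simp [hz], hzj⟩
    · exact ⟨a, by simp, P.consecutive a i j m hij hjm hu ham⟩

-- A vertex of `s` whose first bag comes last lies, together with every other vertex of `s`,
-- in that bag.
theorem PathDecomp.exists_bag_superset_of_isClique (P : PathDecomp G) {s : Finset V}
    (hs : s.Nonempty) (hcl : G.IsClique (s : Set V)) : ∃ j, s ⊆ P.bag j := by
  classical
  have hne : ∀ v, ({j | v ∈ P.bag j} : Finset (Fin P.n)).Nonempty := fun v =>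
    let ⟨i, hi⟩ := P.covers v
    ⟨i, by simpa using hi⟩
  let first v := ({j | v ∈ P.bag j} : Finset (Fin P.n)).min' (hne v)
  have mem_first : ∀ v, v ∈ P.bag (first v) := fun v => by simpa using min'_mem _ (hne v)
  have first_le : ∀ v m, v ∈ P.bag m → first v ≤ m := fun v m hm => min'_le _ _ (by simpa)
  obtain ⟨v₀, hv₀, hmax⟩ := s.exists_max_image first hs
  refine ⟨first v₀, fun v hv => ?_⟩
  rcases eq_or_ne v v₀ with rfl | hvv₀
  · exact mem_first v
  · obtain ⟨m, hvm, hv₀m⟩ := P.coversEdge (hcl hv hv₀ hvv₀)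
    exact P.consecutive v _ _ m (hmax v hv) (first_le v₀ m hv₀m) (mem_first v) hvm

def SimpleGraph.IsRobustOn (G : SimpleGraph V) (t : ℕ) (A : Set V) : Prop :=
  ∀ C : Finset V, #C < t → (G.induce (A \ C)).Preconnected

theorem PathDecomp.le_card_filter_of_isRobustOn (P : PathDecomp G) {t : ℕ} {A : Set V}
    [DecidablePred (· ∈ A)] (hA : G.IsRobustOn t A) {i j k : Fin P.n} (hij : i ≤ j) (hjk : j ≤ k)
    {u v : V} (hu : u ∈ A) (hui : u ∈ P.bag i) (huj : u ∉ P.bag j)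
    (hv : v ∈ A) (hvk : v ∈ P.bag k) (hvj : v ∉ P.bag j) :
    t ≤ #{z ∈ P.bag j | z ∈ A} := by
  by_contra! hlt
  have hS : ∀ w ∈ A, w ∉ P.bag j → w ∈ A \ ({z ∈ P.bag j | z ∈ A} : Finset V) :=
    fun w hw hwj => ⟨hw, fun hwC => hwj (mem_filter.1 hwC).1⟩
  obtain ⟨p⟩ := hA _ hlt ⟨u, hS u hu huj⟩ ⟨v, hS v hv hvj⟩
  obtain ⟨z, hz, hzj⟩ :=
    P.exists_mem_support_mem_bag_s15 (p.map (Embedding.induce _).toHom) hij hjk hui hvk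
  rw [Walk.support_map, List.mem_map] at hz
  obtain ⟨z, -, rfl⟩ := hz
  exact z.2.2 (mem_filter.2 ⟨hzj, z.2.1⟩)

end PathDecomp

theorem exists_notMem_and_notMem_of_card_lt {ι V : Type} [Fintype ι] {f g : ι → V}
    (hf : f.Injective) (hg : g.Injective) (hfg : ∀ i i', f i ≠ g i') {C : Finset V}
    (hC : #C < Fintype.card ι) : ∃ i, f i ∉ C ∧ g i ∉ C := by
  classical
  by_contra! hfC
  let F i := if f i ∈ C then f i else g i
  have hFC : ∀ i, F i ∈ C := fun i => by by_cases h : f i ∈ C <;> simp [F, h, hfC]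
  have hF : F.Injective := by
    intro i i' he
    by_cases h : f i ∈ C <;> by_cases h' : f i' ∈ C <;>
      simp only [F, h, h', if_true, if_false] at he
    exacts [hf he, absurd he (hfg i i'), absurd he.symm (hfg i' i), hg he]
  have := card_le_card_of_injOn (s := univ) F (fun i _ => hFC i) hF.injOn
  rw [card_univ] at this
  omega

theorem List.IsSuffix.eq_or_cons_isSuffix {α : Type} {x l : List α} (hs : x <:+ l) :
    l = x ∨ ∃ b, b :: x <:+ l := by
  obtain ⟨s, rfl⟩ := hs
  rcases List.eq_nil_or_concat s with rfl | ⟨L, b, rfl⟩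
  · simp
  · exact .inr ⟨b, L, by simp⟩

theorem List.IsSuffix.head_eq_of_cons {α : Type} {b b' : α} {x l : List α}
    (hs : b :: x <:+ l) (hs' : b' :: x <:+ l) : b = b' := by
  rcases List.suffix_or_suffix_of_suffix hs hs' with h | h
  · simpa using h.eq_of_length (by simp)
  · simpa using (h.eq_of_length (by simp)).symm

abbrev CTTVertex (h : ℕ) : Type := {l : List (Fin 3) // l.length ≤ h}

theorem CTT.adj_cons {h : ℕ} (x : CTTVertex h) (b : Fin 3) (hb : (b :: x.1).length ≤ h) :
    (CTT h).Adj x ⟨b :: x.1, hb⟩ := by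
  rw [CTT, fromRel_adj]
  exact ⟨fun he => by simpa using congrArg (·.1.length) he, .inl ⟨b, rfl⟩⟩

section Blowup

variable {h t : ℕ}

structure HasBlowupEdges (G : SimpleGraph (CTTVertex h × Fin t)) : Prop where
  clique : ∀ ⦃u v : CTTVertex h × Fin t⦄, u.1 = v.1 → u.2 ≠ v.2 → G.Adj u v
  matching : ∀ (x : CTTVertex h) (b : Fin 3) (hb : (b :: x.1).length ≤ h),
    ∃ σ : Fin t ≃ Fin t, ∀ i, G.Adj (x, i) (⟨b :: x.1, hb⟩, σ i)

theorem hasBlowupEdges_of_adj_iff {M : ∀ ⦃x y⦄, (CTT h).Adj x y → (Fin t ≃ Fin t)}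
    {G : SimpleGraph (CTTVertex h × Fin t)}
    (hG : ∀ a b, G.Adj a b ↔
      (a.1 = b.1 ∧ a.2 ≠ b.2) ∨ ∃ hxy : (CTT h).Adj a.1 b.1, M hxy a.2 = b.2) :
    HasBlowupEdges G where
  clique u v h₁ h₂ := (hG u v).2 (.inl ⟨h₁, h₂⟩)
  matching x b hb := ⟨M (CTT.adj_cons x b hb), fun _ => (hG _ _).2 (.inr ⟨_, rfl⟩)⟩

def subtreeVerts (x : List (Fin 3)) : Set (CTTVertex h × Fin t) := {v | x <:+ v.1.1}

@[simp]
theorem mem_subtreeVerts {x : List (Fin 3)} {v : CTTVertex h × Fin t} :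
    v ∈ subtreeVerts x ↔ x <:+ v.1.1 :=
  Iff.rfl

theorem subtreeVerts_cons_subset_diff {x : List (Fin 3)} {b c : Fin 3} (hbc : b ≠ c) :
    (subtreeVerts (b :: x) : Set (CTTVertex h × Fin t)) ⊆
      subtreeVerts x \ subtreeVerts (c :: x) :=
  fun _ hv => ⟨(List.suffix_cons b x).trans hv, fun hc => hbc (hv.head_eq_of_cons hc)⟩

variable {G : SimpleGraph (CTTVertex h × Fin t)}

-- The `t` pairs `(x, i)`, `(b :: x, σ i)` are disjoint, so one of them avoids `C`.
theorem exists_reachable_fiber (hG : HasBlowupEdges G) {x : List (Fin 3)}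
    {A : Set (CTTVertex h × Fin t)} (hxA : ∀ v : CTTVertex h × Fin t, v.1.1 = x → v ∈ A)
    (hA : ∀ w ∈ A, w.1.1 = x ∨ ∃ b, w ∈ subtreeVerts (b :: x) ∧ subtreeVerts (b :: x) ⊆ A)
    (hrob : ∀ b, G.IsRobustOn t (subtreeVerts (b :: x))) {C : Finset (CTTVertex h × Fin t)}
    (hC : #C < t) (w : ↥(A \ C)) :
    ∃ z : ↥(A \ C), z.1.1.1 = x ∧ (G.induce (A \ C)).Reachable w z := by
  obtain ⟨w, hwA, hwC⟩ := w
  rcases hA w hwA with hwx | ⟨b, hwb, hbA⟩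
  · exact ⟨⟨w, hwA, hwC⟩, hwx, .rfl⟩
  have hb : (b :: x).length ≤ h := hwb.length_le.trans w.1.2
  let y : CTTVertex h := ⟨x, by simp at hb; omega⟩
  obtain ⟨σ, hσ⟩ := hG.matching y b hb
  obtain ⟨i, hyi, hbi⟩ := exists_notMem_and_notMem_of_card_lt
    (f := fun i => (y, i)) (g := fun i => (⟨b :: x, hb⟩, σ i))
    (fun i i' he => congrArg Prod.snd he) (fun i i' he => σ.injective (congrArg Prod.snd he))
    (fun i i' he => by simpa [y] using congrArg (·.1.1.length) he) (by simpa using hC)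
  have hwz : (G.induce (subtreeVerts (b :: x) \ C)).Reachable ⟨w, hwb, hwC⟩
      ⟨(⟨b :: x, hb⟩, σ i), List.suffix_refl _, hbi⟩ :=
    hrob b C hC _ _
  refine ⟨⟨(y, i), hxA _ rfl, hyi⟩, rfl, ?_⟩
  exact (hwz.map (induceHomOfLE G (Set.sdiff_subset_sdiff_left hbA)).toHom).trans
    (induce_adj.2 (hσ i).symm).reachable

-- Every surviving vertex reaches the surviving part of the clique over `x`, which is connected.
theorem isRobustOn_of_forall_child (hG : HasBlowupEdges G) {x : List (Fin 3)}
    {A : Set (CTTVertex h × Fin t)} (hxA : ∀ v : CTTVertex h × Fin t, v.1.1 = x → v ∈ A)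
    (hA : ∀ w ∈ A, w.1.1 = x ∨ ∃ b, w ∈ subtreeVerts (b :: x) ∧ subtreeVerts (b :: x) ⊆ A)
    (hrob : ∀ b, G.IsRobustOn t (subtreeVerts (b :: x))) : G.IsRobustOn t A := by
  intro C hC u v
  obtain ⟨u', hu'x, hu⟩ := exists_reachable_fiber hG hxA hA hrob hC u
  obtain ⟨v', hv'x, hv⟩ := exists_reachable_fiber hG hxA hA hrob hC v
  have hu'v' : (G.induce (A \ C)).Reachable u' v' := by
    have hfib : u'.1.1 = v'.1.1 := Subtype.ext (hu'x.trans hv'x.symm)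
    rcases eq_or_ne u'.1.2 v'.1.2 with h₂ | h₂
    · rw [Subtype.ext (Prod.ext hfib h₂)]
    · exact (induce_adj.2 (hG.clique hfib h₂)).reachable
  exact hu.trans (hu'v'.trans hv.symm)

theorem isRobustOn_subtreeVerts (hG : HasBlowupEdges G) (x : List (Fin 3)) :
    G.IsRobustOn t (subtreeVerts x) := by
  by_cases hx : h < x.length
  · intro C _ u
    have : x.length ≤ h := (u.2.1 : x <:+ _).length_le.trans u.1.1.2
    omega
  refine isRobustOn_of_forall_child hG (fun v hv => by simp [hv]) (fun w hw => ?_)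
    (fun b => isRobustOn_subtreeVerts hG (b :: x))
  rcases (hw : x <:+ w.1.1).eq_or_cons_isSuffix with hwx | ⟨b, hb⟩
  · exact .inl hwx
  · exact .inr ⟨b, hb, fun v hv => (List.suffix_cons b x).trans hv⟩
termination_by h + 1 - x.length
decreasing_by simp; omega

theorem isRobustOn_subtreeVerts_diff (hG : HasBlowupEdges G) (x : List (Fin 3)) (c : Fin 3) :
    G.IsRobustOn t (subtreeVerts x \ subtreeVerts (c :: x)) := by
  refine isRobustOn_of_forall_child hG (fun v hv => ⟨by simp [hv], fun hc => ?_⟩)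
    (fun w hw => ?_) (fun b => isRobustOn_subtreeVerts hG (b :: x))
  · simpa [hv] using (hc : c :: x <:+ v.1.1).length_le
  rcases (hw.1 : x <:+ w.1.1).eq_or_cons_isSuffix with hwx | ⟨b, hb⟩
  · exact .inl hwx
  · have hbc : b ≠ c := by rintro rfl; exact hw.2 hb
    exact .inr ⟨b, hb, subtreeVerts_cons_subset_diff hbc⟩

open Classical in
theorem exists_bag_le_card_subtreeVerts (hG : HasBlowupEdges G) (ht : 1 ≤ t) (P : PathDecomp G)
    {x : List (Fin 3)} (hx : x.length ≤ h) : ∃ j, t ≤ #{v ∈ P.bag j | v ∈ subtreeVerts x} := by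
  let fiber : Finset (CTTVertex h × Fin t) := univ.image fun i => (⟨x, hx⟩, i)
  have hcard : #fiber = t := by
    rw [card_image_of_injective _ fun i i' he => congrArg Prod.snd he, card_univ, Fintype.card_fin]
  have hclique : G.IsClique (fiber : Set (CTTVertex h × Fin t)) := by
    simp only [fiber, coe_image, coe_univ, Set.image_univ]
    rintro _ ⟨i, rfl⟩ _ ⟨i', rfl⟩ hne
    exact hG.clique rfl fun he => hne (congrArg (fun j => ((⟨x, hx⟩ : CTTVertex h), j)) he)
  obtain ⟨j, hj⟩ := P.exists_bag_superset_of_isClique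
    ⟨(⟨x, hx⟩, ⟨0, ht⟩), mem_image_of_mem _ (mem_univ _)⟩ hclique
  refine ⟨j, hcard.symm.trans_le (card_le_card fun v hv => ?_)⟩
  obtain ⟨i, -, rfl⟩ := mem_image.1 hv
  exact mem_filter.2 ⟨hj hv, List.suffix_refl x⟩

open Classical in
theorem exists_bag_mul_le_card_subtreeVerts (hG : HasBlowupEdges G) (ht : 1 ≤ t)
    (P : PathDecomp G) (n : ℕ) :
    ∀ x : List (Fin 3), x.length + n = h →
      ∃ j, t * (n + 1) ≤ #{v ∈ P.bag j | v ∈ subtreeVerts x} := by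
  induction n with
  | zero => exact fun x hx => by simpa using exists_bag_le_card_subtreeVerts hG ht P hx.le
  | succ n ih =>
    intro x hx
    choose jj hjj using fun b : Fin 3 => ih (b :: x) (by simp; omega)
    let σ := Tuple.sort jj
    have hmono := Tuple.monotone_sort jj
    set c := σ 1
    let D : Finset (CTTVertex h × Fin t) :=
      {v ∈ P.bag (jj c) | v ∈ subtreeVerts x \ subtreeVerts (c :: x)}
    have hac : σ 0 ≠ c := σ.injective.ne (by decide)
    have hdc : σ 2 ≠ c := σ.injective.ne (by decide)
    have hchild : ∀ e ≠ c,
        (∃ u ∈ subtreeVerts (e :: x), u ∈ P.bag (jj e) ∧ u ∉ P.bag (jj c)) ∨ t ≤ #D := by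
      intro e hec
      by_contra! he
      have hsub : {v ∈ P.bag (jj e) | v ∈ subtreeVerts (e :: x)} ⊆ D := fun v hv =>
        mem_filter.2 ⟨he.1 v (mem_filter.1 hv).2 (mem_filter.1 hv).1,
          subtreeVerts_cons_subset_diff hec (mem_filter.1 hv).2⟩
      exact he.2.not_ge
        ((Nat.le_mul_of_pos_right t n.succ_pos).trans ((hjj e).trans (card_le_card hsub)))
    have hD : t ≤ #D := by
      by_contra! hlt
      obtain ⟨u, hu, hua, huc⟩ := (hchild (σ 0) hac).resolve_right hlt.not_ge
      obtain ⟨v, hv, hvd, hvc⟩ := (hchild (σ 2) hdc).resolve_right hlt.not_ge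
      exact hlt.not_ge (P.le_card_filter_of_isRobustOn (isRobustOn_subtreeVerts_diff hG x c)
        (hmono (by decide : (0 : Fin 3) ≤ 1)) (hmono (by decide : (1 : Fin 3) ≤ 2))
        (subtreeVerts_cons_subset_diff hac hu) hua huc
        (subtreeVerts_cons_subset_diff hdc hv) hvd hvc)
    refine ⟨jj c, ?_⟩
    let E : Finset (CTTVertex h × Fin t) := {v ∈ P.bag (jj c) | v ∈ subtreeVerts (c :: x)}
    have hdisj : Disjoint D E := disjoint_filter.2 fun _ _ h₁ h₂ => h₁.2 h₂
    calc t * (n + 1 + 1) = t + t * (n + 1) := by ring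
      _ ≤ #D + #E := add_le_add hD (hjj c)
      _ = #(D ∪ E) := (card_union_of_disjoint hdisj).symm
      _ ≤ _ := card_le_card fun v hv => by
        rcases mem_union.1 hv with hv | hv <;> rw [mem_filter] at hv ⊢
        · exact ⟨hv.1, hv.2.1⟩
        · exact ⟨hv.1, (List.suffix_cons c x).trans hv.2⟩

end Blowup

theorem stmt15_general (t h : ℕ) (ht : 1 ≤ t)
    (M : ∀ ⦃x y⦄, (CTT h).Adj x y → (Fin t ≃ Fin t))
    (G : SimpleGraph ({l : List (Fin 3) // l.length ≤ h} × Fin t))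
    (hG : ∀ a b, G.Adj a b ↔
      (a.1 = b.1 ∧ a.2 ≠ b.2) ∨ ∃ hxy : (CTT h).Adj a.1 b.1, M hxy a.2 = b.2) :
    ∀ k, PwLE G k → t * (h + 1) - 1 ≤ k := by
  classical
  rintro k ⟨P, hP⟩
  obtain ⟨j, hj⟩ :=
    exists_bag_mul_le_card_subtreeVerts (hasBlowupEdges_of_adj_iff hG) ht P h [] (by simp)
  have := hj.trans ((card_filter_le _ _).trans (hP j))
  omega

theorem stmt15 (t h : ℕ) (ht : 1 ≤ t)
    (M : ∀ ⦃x y⦄, (CTT h).Adj x y → (Fin t ≃ Fin t))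
    (hM : ∀ ⦃x y⦄ (hxy : (CTT h).Adj x y), M hxy.symm = (M hxy).symm)
    (G : SimpleGraph ({l : List (Fin 3) // l.length ≤ h} × Fin t))
    (hG : ∀ a b, G.Adj a b ↔
      (a.1 = b.1 ∧ a.2 ≠ b.2) ∨ ∃ hxy : (CTT h).Adj a.1 b.1, M hxy a.2 = b.2) :
    ∀ k, PwLE G k → t * (h + 1) - 1 ≤ k :=
  stmt15_general t h ht M G hG
end
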